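/- arXiv:2305.16056 — 3 statements merged into one kernel-verified Lean document; each statement's English description precedes it below -/
import Mathlib

section
/- The total variation distance between two one-dimensional Gaussian distributions with the same unit variance and means $\mu_1, \mu_2$ equals $\mathrm{erf}\left(\frac{|\mu_1 - \mu_2|}{2\sqrt{2}}\right)$. -/
open MeasureTheory

/-- Total variation distance between two measures. -/
noncomputable def tvDist {Ω : Type*} [MeasurableSpace Ω] (P Q : Measure Ω) : ℝ :=
  ⨆ A : {s : Set Ω // MeasurableSet s}, |(P A.1).toReal - (Q A.1).toReal|

/-- The Gauss error function. -/
noncomputable def erf (x : ℝ) : ℝ :=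
  (2 / Real.sqrt Real.pi) * ∫ t in (0:ℝ)..x, Real.exp (-t^2)

open ProbabilityTheory Real Set

private lemma toReal_gauss (μ : ℝ) (s : Set ℝ) :
    ((gaussianReal μ 1) s).toReal = ∫ x in s, gaussianPDFReal μ 1 x := by
  rw [gaussianReal_apply_eq_integral μ one_ne_zero s,
    ENNReal.toReal_ofReal (integral_nonneg (gaussianPDFReal_nonneg μ 1))]

private lemma pdf_comp {a b x : ℝ} (h : (x - a)^2 ≤ (x - b)^2) :
    gaussianPDFReal b 1 x ≤ gaussianPDFReal a 1 x := by
  unfold gaussianPDFReal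
  simp only [NNReal.coe_one, mul_one]
  have : Real.exp (-(x - b)^2 / 2) ≤ Real.exp (-(x - a)^2 / 2) := by
    apply Real.exp_le_exp.2; linarith
  have h0 : (0:ℝ) ≤ (Real.sqrt (2 * π))⁻¹ := by positivity
  exact mul_le_mul_of_nonneg_left this h0

private lemma gauss_Iic_shift (μ r : ℝ) :
    (gaussianReal μ 1) (Set.Iic r) = (gaussianReal 0 1) (Set.Iic (r - μ)) := by
  have h := gaussianReal_map_add_const (μ := 0) (v := 1) μ
  rw [zero_add] at h
  rw [← h, Measure.map_apply (measurable_add_const μ) measurableSet_Iic]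
  congr 1
  ext x
  simp [le_sub_iff_add_le]

private lemma tv_gauss_le {μ1 μ2 : ℝ} (h : μ1 ≤ μ2) :
    tvDist (gaussianReal μ1 1) (gaussianReal μ2 1) =
      erf ((μ2 - μ1) / (2 * Real.sqrt 2)) := by
  set c : ℝ := (μ1 + μ2) / 2 with hc
  set p1 := gaussianPDFReal μ1 1 with hp1
  set p2 := gaussianPDFReal μ2 1 with hp2
  set f : ℝ → ℝ := fun x => p1 x - p2 x with hf
  have hi1 : Integrable p1 := integrable_gaussianPDFReal μ1 1
  have hi2 : Integrable p2 := integrable_gaussianPDFReal μ2 1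
  have hif : Integrable f := hi1.sub hi2
  have hD : ∀ s : Set ℝ,
      ((gaussianReal μ1 1) s).toReal - ((gaussianReal μ2 1) s).toReal = ∫ x in s, f x := by
    intro s
    rw [toReal_gauss, toReal_gauss, ← integral_sub hi1.integrableOn hi2.integrableOn]
  have hfpos : ∀ x ∈ Set.Iic c, 0 ≤ f x := by
    intro x hx
    simp only [Set.mem_Iic] at hx
    exact sub_nonneg.2 (pdf_comp (by nlinarith))
  have hfneg : ∀ x ∈ (Set.Iic c)ᶜ, f x ≤ 0 := by
    intro x hx
    simp only [Set.mem_compl_iff, Set.mem_Iic, not_le] at hx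
    exact sub_nonpos.2 (pdf_comp (by nlinarith))
  have key : ∀ A : Set ℝ, MeasurableSet A → (∫ x in A, f x) ≤ ∫ x in Set.Iic c, f x := by
    intro A hA
    have h1 : ∫ x in A, f x = (∫ x in A ∩ Set.Iic c, f x) + ∫ x in A ∩ (Set.Iic c)ᶜ, f x := by
      have hdis : Disjoint (A ∩ Set.Iic c) (A ∩ (Set.Iic c)ᶜ) :=
        Set.disjoint_left.2 (fun x hx hx' => hx'.2 hx.2)
      have := setIntegral_union (f := f) (μ := volume) hdis
        (hA.inter measurableSet_Iic.compl) hif.integrableOn hif.integrableOn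
      rwa [Set.inter_union_compl] at this
    have h2 : ∫ x in A ∩ (Set.Iic c)ᶜ, f x ≤ 0 :=
      setIntegral_nonpos (hA.inter measurableSet_Iic.compl) (fun x hx => hfneg x hx.2)
    have h3 : ∫ x in Set.Iic c, f x
        = (∫ x in A ∩ Set.Iic c, f x) + ∫ x in Set.Iic c \ A, f x := by
      have hdis : Disjoint (A ∩ Set.Iic c) (Set.Iic c \ A) :=
        Set.disjoint_left.2 (fun x hx hx' => hx'.2 hx.1)
      have := setIntegral_union (f := f) (μ := volume) hdis
        (measurableSet_Iic.diff hA) hif.integrableOn hif.integrableOn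
      have hset : (A ∩ Set.Iic c) ∪ (Set.Iic c \ A) = Set.Iic c := by
        ext x; by_cases hx : x ∈ A <;> simp [hx]
      rwa [hset] at this
    have h4 : 0 ≤ ∫ x in Set.Iic c \ A, f x :=
      setIntegral_nonneg (measurableSet_Iic.diff hA) (fun x hx => hfpos x hx.1)
    linarith
  have hM0 : 0 ≤ ∫ x in Set.Iic c, f x := by
    have h0 := key ∅ MeasurableSet.empty
    simpa using h0
  have huniv : ∫ x, f x = 0 := by
    rw [integral_sub hi1 hi2, hp1, hp2, integral_gaussianPDFReal_eq_one μ1 one_ne_zero,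
      integral_gaussianPDFReal_eq_one μ2 one_ne_zero]
    ring
  have habs : ∀ A : Set ℝ, MeasurableSet A → |∫ x in A, f x| ≤ ∫ x in Set.Iic c, f x := by
    intro A hA
    rw [abs_le]
    refine ⟨?_, key A hA⟩
    have h1 := key Aᶜ hA.compl
    have hsum : (∫ x in A, f x) + ∫ x in Aᶜ, f x = 0 := by
      rw [integral_add_compl hA hif, huniv]
    linarith
  haveI : Nonempty {s : Set ℝ // MeasurableSet s} := ⟨⟨∅, MeasurableSet.empty⟩⟩
  have hsup : tvDist (gaussianReal μ1 1) (gaussianReal μ2 1) = ∫ x in Set.Iic c, f x := by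
    unfold tvDist
    apply le_antisymm
    · exact ciSup_le (fun A => by
        show |((gaussianReal μ1 1) A.1).toReal - ((gaussianReal μ2 1) A.1).toReal| ≤ _
        rw [hD]; exact habs A.1 A.2)
    · have hb : BddAbove (Set.range fun A : {s : Set ℝ // MeasurableSet s} =>
          |((gaussianReal μ1 1) A.1).toReal - ((gaussianReal μ2 1) A.1).toReal|) := by
        refine ⟨∫ x in Set.Iic c, f x, ?_⟩
        rintro x ⟨A, rfl⟩
        show |((gaussianReal μ1 1) A.1).toReal - ((gaussianReal μ2 1) A.1).toReal| ≤ _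
        rw [hD]; exact habs A.1 A.2
      refine le_trans (le_of_eq ?_) (le_ciSup hb ⟨Set.Iic c, measurableSet_Iic⟩)
      show (∫ x in Set.Iic c, f x)
        = |((gaussianReal μ1 1) (Set.Iic c)).toReal - ((gaussianReal μ2 1) (Set.Iic c)).toReal|
      rw [hD, abs_of_nonneg hM0]
  rw [hsup]
  -- computation
  set a : ℝ := (μ2 - μ1) / 2 with ha
  have hIic : ∫ x in Set.Iic c, f x
      = ((gaussianReal 0 1) (Set.Iic a)).toReal - ((gaussianReal 0 1) (Set.Iic (-a))).toReal := by
    rw [← hD (Set.Iic c), gauss_Iic_shift μ1, gauss_Iic_shift μ2]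
    have e1 : c - μ1 = a := by rw [hc, ha]; ring
    have e2 : c - μ2 = -a := by rw [hc, ha]; ring
    rw [e1, e2]
  rw [hIic, toReal_gauss, toReal_gauss,
    intervalIntegral.integral_Iic_sub_Iic (integrable_gaussianPDFReal 0 1).integrableOn
      (integrable_gaussianPDFReal 0 1).integrableOn]
  have h2pos : (0:ℝ) < Real.sqrt 2 := by positivity
  have hpdf : ∀ x : ℝ, gaussianPDFReal 0 1 x
      = (Real.sqrt (2 * π))⁻¹ * Real.exp (-(x / Real.sqrt 2)^2) := by
    intro x
    unfold gaussianPDFReal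
    simp only [NNReal.coe_one, mul_one, sub_zero]
    congr 1
    rw [div_pow, Real.sq_sqrt (by norm_num : (0:ℝ) ≤ 2)]
    ring
  simp_rw [hpdf]
  rw [intervalIntegral.integral_const_mul,
    intervalIntegral.integral_comp_div (fun t => Real.exp (-t^2)) (ne_of_gt h2pos)]
  have heven : ∀ b : ℝ, (∫ t in (-b)..b, Real.exp (-t^2))
      = 2 * ∫ t in (0:ℝ)..b, Real.exp (-t^2) := by
    intro b
    have hint : ∀ u v : ℝ, IntervalIntegrable (fun t => Real.exp (-t^2)) volume u v :=
      fun u v => Continuous.intervalIntegrable (by continuity) u v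
    have hsplit := intervalIntegral.integral_add_adjacent_intervals (hint (-b) 0) (hint 0 b)
    have hneg := intervalIntegral.integral_comp_neg (a := (0:ℝ)) (b := b)
      (fun t => Real.exp (-t^2))
    simp only [neg_sq, neg_zero] at hneg
    linarith
  have hnegdiv : -a / Real.sqrt 2 = -(a / Real.sqrt 2) := by ring
  rw [hnegdiv, heven]
  have hearg : a / Real.sqrt 2 = (μ2 - μ1) / (2 * Real.sqrt 2) := by rw [ha]; ring
  rw [hearg]
  unfold erf
  have hsqrt : Real.sqrt (2 * π) = Real.sqrt 2 * Real.sqrt π :=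
    Real.sqrt_mul (by norm_num) π
  have hppos : (0:ℝ) < Real.sqrt π := Real.sqrt_pos.2 Real.pi_pos
  rw [hsqrt, smul_eq_mul]
  field_simp

theorem stmt_4 (μ1 μ2 : ℝ) :
    tvDist (ProbabilityTheory.gaussianReal μ1 1) (ProbabilityTheory.gaussianReal μ2 1) =
      erf (|μ1 - μ2| / (2 * Real.sqrt 2)) := by
  rcases le_total μ1 μ2 with h | h
  · rw [abs_sub_comm, abs_of_nonneg (by linarith : (0:ℝ) ≤ μ2 - μ1)]
    exact tv_gauss_le h
  · have hsymm : tvDist (gaussianReal μ1 1) (gaussianReal μ2 1)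
        = tvDist (gaussianReal μ2 1) (gaussianReal μ1 1) := by
      unfold tvDist
      congr 1
      funext A
      rw [abs_sub_comm]
    rw [hsymm, abs_of_nonneg (by linarith : (0:ℝ) ≤ μ1 - μ2)]
    exact tv_gauss_le h
end

section
/- For all $x \ge 0$, $\mathrm{erf}(x) \le \sqrt{1 - e^{-4x^2/\pi}}$. -/
open MeasureTheory Set Real
open scoped Real

/-- The quarter disk of radius `r` in the first quadrant. -/
def qd (r : ℝ) : Set (ℝ × ℝ) := {p | 0 ≤ p.1 ∧ 0 ≤ p.2 ∧ p.1 ^ 2 + p.2 ^ 2 ≤ r ^ 2}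

/-- The two-dimensional Gaussian. -/
noncomputable def F2 : ℝ × ℝ → ℝ := fun p => Real.exp (-(p.1 ^ 2 + p.2 ^ 2))

lemma qd_isClosed (r : ℝ) : IsClosed (qd r) := by
  have h : qd r = {p : ℝ × ℝ | 0 ≤ p.1} ∩ ({p : ℝ × ℝ | 0 ≤ p.2} ∩
      {p : ℝ × ℝ | p.1 ^ 2 + p.2 ^ 2 ≤ r ^ 2}) := by
    ext p; simp [qd, and_assoc]
  rw [h]
  exact (isClosed_le continuous_const continuous_fst).inter
    ((isClosed_le continuous_const continuous_snd).inter
      (isClosed_le ((continuous_fst.pow 2).add (continuous_snd.pow 2)) continuous_const))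

lemma qd_subset (r : ℝ) (hr : 0 ≤ r) : qd r ⊆ Icc 0 r ×ˢ Icc 0 r := by
  rintro ⟨a, b⟩ ⟨ha, hb, hc⟩
  dsimp only at ha hb hc
  have har : a ≤ r := by nlinarith [sq_nonneg a, sq_nonneg b]
  have hbr : b ≤ r := by nlinarith [sq_nonneg a, sq_nonneg b]
  exact ⟨⟨ha, har⟩, ⟨hb, hbr⟩⟩

lemma integral_qd (r : ℝ) (hr : 0 ≤ r) (g : ℝ → ℝ) :
    ∫ p in qd r, g (p.1 ^ 2 + p.2 ^ 2) =
      (∫ ρ in Ioc 0 r, ρ * g (ρ ^ 2)) * (π / 2) := by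
  have h1 : (∫ p in qd r, g (p.1 ^ 2 + p.2 ^ 2))
      = ∫ p : ℝ × ℝ, (qd r).indicator (fun q => g (q.1 ^ 2 + q.2 ^ 2)) p :=
    (integral_indicator (qd_isClosed r).measurableSet).symm
  rw [h1, ← integral_comp_polarCoord_symm]
  have hSm : MeasurableSet (Ioc (0:ℝ) r ×ˢ Icc 0 (π/2)) :=
    measurableSet_Ioc.prod measurableSet_Icc
  have hSsub : Ioc (0:ℝ) r ×ˢ Icc 0 (π/2) ⊆ polarCoord.target := by
    rintro ⟨ρ, θ⟩ ⟨h1, h2⟩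
    simp only [mem_Ioc] at h1
    simp only [mem_Icc] at h2
    have hπ : (0:ℝ) < π := pi_pos
    exact ⟨h1.1, by constructor <;> [linarith [h2.1]; linarith [h2.2]]⟩
  have key : ∀ p ∈ polarCoord.target,
      p.1 • (qd r).indicator (fun q => g (q.1 ^ 2 + q.2 ^ 2)) (polarCoord.symm p)
        = (Ioc (0:ℝ) r ×ˢ Icc 0 (π/2)).indicator (fun p : ℝ × ℝ => p.1 * g (p.1 ^ 2)) p := by
    rintro ⟨ρ, θ⟩ ⟨hρ, hθ⟩
    simp only [mem_Ioi] at hρ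
    simp only [mem_Ioo] at hθ
    have hsymm : polarCoord.symm (ρ, θ) = (ρ * cos θ, ρ * sin θ) := rfl
    have hsum : (ρ * cos θ) ^ 2 + (ρ * sin θ) ^ 2 = ρ ^ 2 := by
      calc (ρ * cos θ) ^ 2 + (ρ * sin θ) ^ 2 = ρ ^ 2 * (sin θ ^ 2 + cos θ ^ 2) := by ring
        _ = ρ ^ 2 := by rw [sin_sq_add_cos_sq, mul_one]
    have hmem : polarCoord.symm (ρ, θ) ∈ qd r ↔
        (ρ, θ) ∈ Ioc (0:ℝ) r ×ˢ Icc 0 (π/2) := by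
      rw [hsymm]
      constructor
      · rintro ⟨ha, hb, hc⟩
        dsimp only at ha hb hc
        have hcos : 0 ≤ cos θ := by
          by_contra h
          push_neg at h
          nlinarith
        have hsin : 0 ≤ sin θ := by
          by_contra h
          push_neg at h
          nlinarith
        have hθ0 : 0 ≤ θ := by
          by_contra h
          push_neg at h
          exact absurd hsin (not_le.2 (Real.sin_neg_of_neg_of_neg_pi_lt h hθ.1))
        have hθ2 : θ ≤ π / 2 := by
          by_contra h
          push_neg at h
          have hc2 : cos θ < 0 :=
            Real.cos_neg_of_pi_div_two_lt_of_lt h (by linarith [pi_pos, hθ.2])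
          linarith
        have hρr : ρ ≤ r := by
          rw [hsum] at hc
          nlinarith
        exact ⟨⟨hρ, hρr⟩, hθ0, hθ2⟩
      · rintro ⟨⟨h1, h2⟩, h3, h4⟩
        refine ⟨?_, ?_, ?_⟩
        · exact mul_nonneg hρ.le (Real.cos_nonneg_of_mem_Icc ⟨by linarith [pi_pos], h4⟩)
        · exact mul_nonneg hρ.le (Real.sin_nonneg_of_nonneg_of_le_pi h3 (by linarith [pi_pos]))
        · rw [hsum]
          nlinarith
    by_cases hin : (ρ, θ) ∈ Ioc (0:ℝ) r ×ˢ Icc 0 (π/2)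
    · rw [indicator_of_mem (hmem.mpr hin), indicator_of_mem hin]
      rw [hsymm]
      simp only [smul_eq_mul]
      rw [hsum]
    · rw [indicator_of_notMem (fun h => hin (hmem.mp h)), indicator_of_notMem hin, smul_zero]
  rw [setIntegral_congr_fun polarCoord.open_target.measurableSet key,
    setIntegral_indicator hSm, inter_eq_self_of_subset_right hSsub]
  have h2 : (∫ p in Ioc (0:ℝ) r ×ˢ Icc 0 (π/2), p.1 * g (p.1 ^ 2))
      = ∫ p in Ioc (0:ℝ) r ×ˢ Icc 0 (π/2),
          (fun ρ => ρ * g (ρ ^ 2)) p.1 * (fun _ : ℝ => (1:ℝ)) p.2 := by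
    simp
  have h3 := setIntegral_prod_mul (μ := (volume : Measure ℝ)) (ν := (volume : Measure ℝ))
    (fun ρ => ρ * g (ρ ^ 2)) (fun _ => (1:ℝ)) (Ioc 0 r) (Icc 0 (π/2))
  rw [h2, Measure.volume_eq_prod ℝ ℝ, h3]
  congr 1
  rw [setIntegral_const, measureReal_def, Real.volume_Icc, smul_eq_mul, mul_one,
    ENNReal.toReal_ofReal (by linarith [Real.pi_pos] : (0:ℝ) ≤ π/2 - 0)]
  ring

lemma int_rho (r : ℝ) (hr : 0 ≤ r) : ∫ ρ in Ioc (0:ℝ) r, ρ * (1:ℝ) = r ^ 2 / 2 := by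
  simp only [mul_one]
  rw [← intervalIntegral.integral_of_le hr, integral_id]
  ring

lemma int_rho_exp (r : ℝ) (hr : 0 ≤ r) :
    ∫ ρ in Ioc (0:ℝ) r, ρ * Real.exp (-ρ ^ 2) = (1 - Real.exp (-r ^ 2)) / 2 := by
  rw [← intervalIntegral.integral_of_le hr]
  have hderiv : ∀ ρ : ℝ, HasDerivAt (fun t : ℝ => -Real.exp (-t ^ 2) / 2)
      (ρ * Real.exp (-ρ ^ 2)) ρ := by
    intro ρ
    have h1 : HasDerivAt (fun t : ℝ => -t ^ 2) (-(2 * ρ)) ρ := by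
      simpa using (hasDerivAt_pow 2 ρ).fun_neg
    have h3 := (h1.exp.fun_neg).div_const 2
    refine h3.congr_deriv ?_
    ring
  rw [intervalIntegral.integral_eq_sub_of_hasDerivAt (fun ρ _ => hderiv ρ)
    (Continuous.intervalIntegrable (by continuity) 0 r)]
  norm_num
  ring

theorem stmt_5 (x : ℝ) (hx : 0 ≤ x) :
    erf x ≤ Real.sqrt (1 - Real.exp (-4 * x^2 / Real.pi)) := by
  have hπ : (0:ℝ) < π := pi_pos
  set r : ℝ := 2 * x / Real.sqrt π with hr_def
  have hr : 0 ≤ r := by positivity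
  have hrsq : r ^ 2 = 4 * x ^ 2 / π := by
    rw [hr_def, div_pow, sq_sqrt hπ.le]
    ring
  have hQm : MeasurableSet (Ioc (0:ℝ) x ×ˢ Ioc (0:ℝ) x) := measurableSet_Ioc.prod measurableSet_Ioc
  have hDm : MeasurableSet (qd r) := (qd_isClosed r).measurableSet
  have hQfin : volume (Ioc (0:ℝ) x ×ˢ Ioc (0:ℝ) x) < ⊤ :=
    lt_of_le_of_lt (measure_mono (prod_mono Ioc_subset_Icc_self Ioc_subset_Icc_self))
      (isCompact_Icc.prod isCompact_Icc).measure_lt_top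
  have hDfin : volume (qd r) < ⊤ :=
    lt_of_le_of_lt (measure_mono (qd_subset r hr))
      (isCompact_Icc.prod isCompact_Icc).measure_lt_top
  -- integrability of the 2D Gaussian
  have hfint : Integrable F2 := by
    have h1 : Integrable (fun t : ℝ => Real.exp (-1 * t ^ 2)) := integrable_exp_neg_mul_sq one_pos
    have h2 : Integrable (fun p : ℝ × ℝ =>
        Real.exp (-1 * p.1 ^ 2) * Real.exp (-1 * p.2 ^ 2)) := by
      rw [Measure.volume_eq_prod ℝ ℝ]
      exact h1.mul_prod h1
    have heq : F2 = fun p : ℝ × ℝ => Real.exp (-1 * p.1 ^ 2) * Real.exp (-1 * p.2 ^ 2) := by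
      funext p
      rw [F2, ← Real.exp_add]
      ring_nf
    rw [heq]
    exact h2
  -- equal areas
  have hQ1 : ∫ _ in Ioc (0:ℝ) x ×ˢ Ioc (0:ℝ) x, (1:ℝ) = x ^ 2 := by
    rw [setIntegral_const, smul_eq_mul, mul_one, Measure.volume_eq_prod ℝ ℝ, measureReal_def, Measure.prod_prod,
      Real.volume_Ioc, sub_zero, ← ENNReal.ofReal_mul hx, ENNReal.toReal_ofReal (by positivity)]
    ring
  have hD1 : ∫ _ in qd r, (1:ℝ) = x ^ 2 := by
    have h : (∫ _ in qd r, (1:ℝ)) = (∫ ρ in Ioc (0:ℝ) r, ρ * (1:ℝ)) * (π / 2) :=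
      integral_qd r hr (fun _ => (1:ℝ))
    rw [h, int_rho r hr, hrsq]
    field_simp
    ring
  have hDexp : ∫ p in qd r, F2 p = (1 - Real.exp (-r ^ 2)) / 2 * (π / 2) := by
    have h : (∫ p in qd r, F2 p) = (∫ ρ in Ioc (0:ℝ) r, ρ * Real.exp (-ρ ^ 2)) * (π / 2) :=
      integral_qd r hr (fun u => Real.exp (-u))
    rw [h, int_rho_exp r hr]
  -- the square integral
  have hQf : (∫ t in Ioc (0:ℝ) x, Real.exp (-t ^ 2)) * (∫ t in Ioc (0:ℝ) x, Real.exp (-t ^ 2))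
      = ∫ p in Ioc (0:ℝ) x ×ˢ Ioc (0:ℝ) x, F2 p := by
    rw [Measure.volume_eq_prod ℝ ℝ, ← setIntegral_prod_mul]
    apply setIntegral_congr_fun hQm
    intro p _
    show Real.exp (-p.1 ^ 2) * Real.exp (-p.2 ^ 2) = F2 p
    rw [F2, ← Real.exp_add]
    ring_nf
  -- main comparison
  have hemeas : MeasurableSet (Ioc (0:ℝ) x ×ˢ Ioc (0:ℝ) x \ qd r) := hQm.diff hDm
  have hcmeas : MeasurableSet (qd r \ Ioc (0:ℝ) x ×ˢ Ioc (0:ℝ) x) := hDm.diff hQm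
  have hBfin : volume (Ioc (0:ℝ) x ×ˢ Ioc (0:ℝ) x \ qd r) < ⊤ :=
    lt_of_le_of_lt (measure_mono diff_subset) hQfin
  have hCfin : volume (qd r \ Ioc (0:ℝ) x ×ˢ Ioc (0:ℝ) x) < ⊤ :=
    lt_of_le_of_lt (measure_mono diff_subset) hDfin
  have hAfin : volume (Ioc (0:ℝ) x ×ˢ Ioc (0:ℝ) x ∩ qd r) < ⊤ :=
    lt_of_le_of_lt (measure_mono inter_subset_left) hQfin
  have hsplitQ : ∫ p in Ioc (0:ℝ) x ×ˢ Ioc (0:ℝ) x, F2 p =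
      (∫ p in Ioc (0:ℝ) x ×ˢ Ioc (0:ℝ) x ∩ qd r, F2 p) +
        ∫ p in Ioc (0:ℝ) x ×ˢ Ioc (0:ℝ) x \ qd r, F2 p := by
    conv_lhs => rw [← inter_union_diff (Ioc (0:ℝ) x ×ˢ Ioc (0:ℝ) x) (qd r)]
    exact setIntegral_union (disjoint_sdiff_self_right.mono_left inter_subset_right) hemeas
      hfint.integrableOn hfint.integrableOn
  have hsplitD : ∫ p in qd r, F2 p =
      (∫ p in Ioc (0:ℝ) x ×ˢ Ioc (0:ℝ) x ∩ qd r, F2 p) +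
        ∫ p in qd r \ Ioc (0:ℝ) x ×ˢ Ioc (0:ℝ) x, F2 p := by
    have hu : qd r = (Ioc (0:ℝ) x ×ˢ Ioc (0:ℝ) x ∩ qd r) ∪
        (qd r \ Ioc (0:ℝ) x ×ˢ Ioc (0:ℝ) x) := by
      rw [inter_comm, inter_union_diff]
    conv_lhs => rw [hu]
    exact setIntegral_union (disjoint_sdiff_self_right.mono_left inter_subset_left) hcmeas
      hfint.integrableOn hfint.integrableOn
  have hBC : (volume (Ioc (0:ℝ) x ×ˢ Ioc (0:ℝ) x \ qd r)).toReal
      = (volume (qd r \ Ioc (0:ℝ) x ×ˢ Ioc (0:ℝ) x)).toReal := by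
    have e1 := measure_inter_add_diff (μ := volume) (Ioc (0:ℝ) x ×ˢ Ioc (0:ℝ) x) hDm
    have e2 := measure_inter_add_diff (μ := volume) (qd r) hQm
    have hQvol : (volume (Ioc (0:ℝ) x ×ˢ Ioc (0:ℝ) x)).toReal = x ^ 2 := by
      rw [← hQ1, setIntegral_const, smul_eq_mul, mul_one, measureReal_def]
    have hDvol : (volume (qd r)).toReal = x ^ 2 := by
      rw [← hD1, setIntegral_const, smul_eq_mul, mul_one, measureReal_def]
    have t1 : (volume (Ioc (0:ℝ) x ×ˢ Ioc (0:ℝ) x ∩ qd r)).toReal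
        + (volume (Ioc (0:ℝ) x ×ˢ Ioc (0:ℝ) x \ qd r)).toReal = x ^ 2 := by
      rw [← ENNReal.toReal_add hAfin.ne hBfin.ne, e1, hQvol]
    have t2 : (volume (Ioc (0:ℝ) x ×ˢ Ioc (0:ℝ) x ∩ qd r)).toReal
        + (volume (qd r \ Ioc (0:ℝ) x ×ˢ Ioc (0:ℝ) x)).toReal = x ^ 2 := by
      have hAfin' : volume (qd r ∩ Ioc (0:ℝ) x ×ˢ Ioc (0:ℝ) x) < ⊤ := by
        rwa [inter_comm] at hAfin
      rw [inter_comm (Ioc (0:ℝ) x ×ˢ Ioc (0:ℝ) x) (qd r),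
        ← ENNReal.toReal_add hAfin'.ne hCfin.ne, e2, hDvol]
    linarith
  have hB : ∫ p in Ioc (0:ℝ) x ×ˢ Ioc (0:ℝ) x \ qd r, F2 p
      ≤ (volume (Ioc (0:ℝ) x ×ˢ Ioc (0:ℝ) x \ qd r)).toReal * Real.exp (-r ^ 2) := by
    have hmono : ∫ p in Ioc (0:ℝ) x ×ˢ Ioc (0:ℝ) x \ qd r, F2 p
        ≤ ∫ _ in Ioc (0:ℝ) x ×ˢ Ioc (0:ℝ) x \ qd r, Real.exp (-r ^ 2) := by
      refine setIntegral_mono_on hfint.integrableOn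
        ((integrableOn_const_iff (C := Real.exp (-r ^ 2))).2 (Or.inr hBfin)) hemeas ?_
      rintro ⟨a, b⟩ ⟨hpQ, hpD⟩
      have ha : 0 < a := hpQ.1.1
      have hb : 0 < b := hpQ.2.1
      have hsum : r ^ 2 < a ^ 2 + b ^ 2 := by
        by_contra h
        push_neg at h
        exact hpD ⟨ha.le, hb.le, h⟩
      show Real.exp (-((a, b).1 ^ 2 + (a, b).2 ^ 2)) ≤ Real.exp (-r ^ 2)
      dsimp only
      exact Real.exp_le_exp.2 (by linarith)
    rwa [setIntegral_const, smul_eq_mul, measureReal_def] at hmono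
  have hC : (volume (qd r \ Ioc (0:ℝ) x ×ˢ Ioc (0:ℝ) x)).toReal * Real.exp (-r ^ 2)
      ≤ ∫ p in qd r \ Ioc (0:ℝ) x ×ˢ Ioc (0:ℝ) x, F2 p := by
    have hmono : (∫ _ in qd r \ Ioc (0:ℝ) x ×ˢ Ioc (0:ℝ) x, Real.exp (-r ^ 2))
        ≤ ∫ p in qd r \ Ioc (0:ℝ) x ×ˢ Ioc (0:ℝ) x, F2 p := by
      refine setIntegral_mono_on
        ((integrableOn_const_iff (C := Real.exp (-r ^ 2))).2 (Or.inr hCfin)) hfint.integrableOn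
        hcmeas ?_
      rintro ⟨a, b⟩ ⟨hpD, _⟩
      have hab : a ^ 2 + b ^ 2 ≤ r ^ 2 := hpD.2.2
      show Real.exp (-r ^ 2) ≤ Real.exp (-((a, b).1 ^ 2 + (a, b).2 ^ 2))
      dsimp only
      exact Real.exp_le_exp.2 (by linarith)
    rwa [setIntegral_const, smul_eq_mul, measureReal_def] at hmono
  have hmain : ∫ p in Ioc (0:ℝ) x ×ˢ Ioc (0:ℝ) x, F2 p ≤ ∫ p in qd r, F2 p := by
    rw [hsplitQ, hsplitD]
    rw [hBC] at hB
    linarith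
  -- conclusion
  have hI : 0 ≤ ∫ t in (0:ℝ)..x, Real.exp (-t ^ 2) :=
    intervalIntegral.integral_nonneg hx (fun t _ => (Real.exp_pos _).le)
  have herf_nonneg : 0 ≤ erf x := by
    unfold erf
    exact mul_nonneg (by positivity) hI
  have hrw : -r ^ 2 = -4 * x ^ 2 / π := by rw [hrsq]; ring
  have hy : 0 ≤ 1 - Real.exp (-4 * x ^ 2 / π) := by
    have h0 : -4 * x ^ 2 / π ≤ 0 := by
      rw [← hrw]
      nlinarith [sq_nonneg r]
    have := Real.exp_le_one_iff.2 h0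
    linarith
  rw [Real.le_sqrt herf_nonneg hy]
  have herfsq : erf x ^ 2 = 4 / π *
      ((∫ t in Ioc (0:ℝ) x, Real.exp (-t ^ 2)) * (∫ t in Ioc (0:ℝ) x, Real.exp (-t ^ 2))) := by
    unfold erf
    rw [intervalIntegral.integral_of_le hx, mul_pow, div_pow, sq_sqrt hπ.le]
    ring
  rw [herfsq, hQf]
  calc 4 / π * (∫ p in Ioc (0:ℝ) x ×ˢ Ioc (0:ℝ) x, F2 p)
      ≤ 4 / π * ((1 - Real.exp (-r ^ 2)) / 2 * (π / 2)) := by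
        apply mul_le_mul_of_nonneg_left (hmain.trans_eq hDexp) (by positivity)
    _ = 1 - Real.exp (-r ^ 2) := by field_simp; ring
    _ = 1 - Real.exp (-4 * x ^ 2 / π) := by rw [hrw]
end

section
/- Let $v \in \mathbb{R}^N$, let $\hat\Pi$ be the orthogonal projection onto a linear subspace $\mathcal{F}_N \subseteq \mathbb{R}^N$, let $\hat{\mathcal{T}}$ be a $\gamma$-contraction in the Euclidean norm with $\gamma \in (0,1)$, and let $\hat v$ be the unique fixed point of $\hat\Pi\hat{\mathcal{T}}$. Then $\|v - \hat v\|_2 \le \frac{1}{\sqrt{1-\gamma^2}} \|v - \hat\Pi v\|_2 + \frac{1}{1-\gamma} \|\hat\Pi v - \hat\Pi \hat{\mathcal{T}} v\|_2$. -/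
/-!
Split `v - v̂` at `Π̂ v`. Since `v̂ ∈ 𝓕_N`, Pythagoras gives
`‖v - v̂‖² = ‖v - Π̂ v‖² + ‖Π̂ v - v̂‖²`, and writing `v̂ = Π̂ 𝓣̂ v̂`, the second term is at most
`‖Π̂ v - Π̂ 𝓣̂ v‖ + γ ‖v - v̂‖` because `Π̂` is non-expansive. With `d = ‖v - v̂‖`,
`a = ‖v - Π̂ v‖`, `b = ‖Π̂ v - Π̂ 𝓣̂ v‖` this is the quadratic inequality `d² ≤ a² + (b + γ d)²`,
which is solved by factoring `d² - (b + γ d)²`.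
-/

open Submodule

lemma le_div_sqrt_add_div_of_sq_le_sq_add_sq {a b d γ : ℝ} (ha : 0 ≤ a) (hb : 0 ≤ b)
    (hγ : |γ| < 1) (h : d ^ 2 ≤ a ^ 2 + (b + γ * d) ^ 2) :
    d ≤ a / √(1 - γ ^ 2) + b / (1 - γ) := by
  obtain ⟨hγ₀, hγ₁⟩ := abs_lt.mp hγ
  have hsq : 0 < 1 - γ ^ 2 := by nlinarith
  set s := √(1 - γ ^ 2)
  have hs : 0 < s := Real.sqrt_pos.mpr hsq
  have hs2 : s ^ 2 = 1 - γ ^ 2 := Real.sq_sqrt hsq.le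
  set u := a / s
  have hu : 0 ≤ u := by positivity
  have hus : u * s = a := div_mul_cancel₀ a hs.ne'
  by_contra! hlt
  have hbd : b < (1 - γ) * (d - u) := by
    rw [mul_comm, ← div_lt_iff₀ (by linarith)]
    linarith
  have hud : u ≤ d := by
    have : 0 ≤ b / (1 - γ) := div_nonneg hb (by linarith)
    linarith
  -- `d² - (b + γ d)² = ((1 - γ) d - b) ((1 + γ) d + b)`, and each factor beats its counterpart in
  -- `a² = ((1 - γ) u) ((1 + γ) u)`.
  have hfactor : (1 - γ) * u * ((1 + γ) * u) < ((1 - γ) * d - b) * ((1 + γ) * d + b) :=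
    mul_lt_mul' (by linarith) (by nlinarith) (by nlinarith) (by nlinarith)
  have ha2 : (1 - γ) * u * ((1 + γ) * u) = a ^ 2 := by
    rw [← hus]; linear_combination (-u ^ 2) * hs2
  have hd2 : ((1 - γ) * d - b) * ((1 + γ) * d + b) = d ^ 2 - (b + γ * d) ^ 2 := by ring
  linarith

variable {E : Type*} [NormedAddCommGroup E] [InnerProductSpace ℝ E]

theorem Submodule.norm_sub_sq_eq_norm_sub_starProjection_sq_add (K : Submodule ℝ E)
    [K.HasOrthogonalProjection] (v : E) {w : E} (hw : w ∈ K) :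
    ‖v - w‖ ^ 2 = ‖v - K.starProjection v‖ ^ 2 + ‖K.starProjection v - w‖ ^ 2 := by
  have hperp : inner ℝ (v - K.starProjection v) (K.starProjection v - w) = 0 :=
    K.inner_left_of_mem_orthogonal (K.sub_mem (K.starProjection_apply_mem v) hw)
      (K.sub_starProjection_mem_orthogonal v)
  rw [← sub_add_sub_cancel v (K.starProjection v) w, norm_add_sq_real, hperp]
  ring

theorem Submodule.norm_sub_le_of_starProjection_comp_apply_eq (K : Submodule ℝ E)
    [K.HasOrthogonalProjection] {T : E → E} {γ : ℝ} (hγ : |γ| < 1)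
    (hT : ∀ x y, ‖T x - T y‖ ≤ γ * ‖x - y‖) (v : E) {w : E}
    (hw : K.starProjection (T w) = w) :
    ‖v - w‖ ≤ ‖v - K.starProjection v‖ / √(1 - γ ^ 2) +
      ‖K.starProjection v - K.starProjection (T v)‖ / (1 - γ) := by
  have hwK : w ∈ K := hw ▸ K.starProjection_apply_mem (T w)
  have hcontr : ‖K.starProjection (T v) - w‖ ≤ γ * ‖v - w‖ := by
    calc ‖K.starProjection (T v) - w‖ = ‖K.starProjection (T v - T w)‖ := by
          rw [map_sub, hw]
      _ ≤ ‖T v - T w‖ := K.norm_starProjection_apply_le _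
      _ ≤ γ * ‖v - w‖ := hT v w
  have hproj : ‖K.starProjection v - w‖ ≤
      ‖K.starProjection v - K.starProjection (T v)‖ + γ * ‖v - w‖ :=
    (norm_sub_le_norm_sub_add_norm_sub _ _ _).trans (by gcongr)
  refine le_div_sqrt_add_div_of_sq_le_sq_add_sq (norm_nonneg _) (norm_nonneg _) hγ ?_
  rw [K.norm_sub_sq_eq_norm_sub_starProjection_sq_add v hwK]
  gcongr

theorem stmt_19 (N : ℕ) (γ : ℝ) (hγ : γ ∈ Set.Ioo (0:ℝ) 1)
    (F : Submodule ℝ (EuclideanSpace ℝ (Fin N)))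
    (T : EuclideanSpace ℝ (Fin N) → EuclideanSpace ℝ (Fin N))
    (hT : ∀ x y, ‖T x - T y‖ ≤ γ * ‖x - y‖)
    (v hatv : EuclideanSpace ℝ (Fin N))
    (hfix : (Submodule.orthogonalProjectionOnto F (T hatv) : EuclideanSpace ℝ (Fin N)) = hatv) :
    ‖v - hatv‖ ≤
      (1 / Real.sqrt (1 - γ^2)) * ‖v - (Submodule.orthogonalProjectionOnto F v : EuclideanSpace ℝ (Fin N))‖ +
        (1 / (1 - γ)) *
          ‖(Submodule.orthogonalProjectionOnto F v : EuclideanSpace ℝ (Fin N)) -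
            (Submodule.orthogonalProjectionOnto F (T v) : EuclideanSpace ℝ (Fin N))‖ := by
  have hγ' : |γ| < 1 := abs_lt.mpr ⟨by linarith [hγ.1], hγ.2⟩
  simp only [← starProjection_apply] at hfix ⊢
  simpa only [one_div_mul_eq_div] using
    F.norm_sub_le_of_starProjection_comp_apply_eq hγ' hT v hfix
end
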